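/- Let W and U be unitaries on H ⊗ H such that W satisfies the pentagon equation W₁₂W₁₃W₂₃ = W₂₃W₁₂, U satisfies the pentagon equation U₁₂U₁₃U₂₃ = U₂₃U₁₂, and W₁₂* U₂₃ W₁₂ = U₁₃ U₂₃. Setting F := W U*, the unitary F satisfies F₂₃ F₁₂ F₂₃* = W₂₃ F₁₂ W₂₃*. -/

import Mathlib

/-!
Write `F₁₂ = W₁₂ U₁₂*` and `F₂₃ = W₂₃ U₂₃*`. It suffices that `U₂₃` commutes with `W₁₂ U₁₂*`,
since then `U₂₃*` cancels against `U₂₃` in `F₂₃ F₁₂ F₂₃*`. The bicharacter relation gives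
`U₂₃ W₁₂ = W₁₂ U₁₃ U₂₃`, and the pentagon equation for `U` rewrites `U₁₃ U₂₃` as `U₁₂* U₂₃ U₁₂`,
so `U₂₃ W₁₂ U₁₂* = W₁₂ U₁₂* U₂₃`.
-/

section

variable {M : Type*} [Monoid M] [StarMul M]

theorem commute_mul_star_of_pentagon {w u₁₂ u₁₃ u₂₃ : M} (hw : w * star w = 1)
    (hu : u₁₂ ∈ unitary M) (hpent : u₁₂ * u₁₃ * u₂₃ = u₂₃ * u₁₂)
    (hbichar : star w * u₂₃ * w = u₁₃ * u₂₃) :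
    Commute u₂₃ (w * star u₁₂) := by
  have hw_conj : u₂₃ * w = w * (u₁₃ * u₂₃) := by
    rw [← hbichar, ← mul_assoc, ← mul_assoc, hw, one_mul]
  have hpent' : u₁₃ * u₂₃ = star u₁₂ * u₂₃ * u₁₂ :=
    calc u₁₃ * u₂₃ = star u₁₂ * u₁₂ * (u₁₃ * u₂₃) := by
          rw [Unitary.star_mul_self_of_mem hu, one_mul]
      _ = star u₁₂ * (u₁₂ * u₁₃ * u₂₃) := by simp only [mul_assoc]
      _ = star u₁₂ * u₂₃ * u₁₂ := by rw [hpent, mul_assoc]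
  calc u₂₃ * (w * star u₁₂)
      = w * star u₁₂ * u₂₃ * (u₁₂ * star u₁₂) := by
        rw [← mul_assoc, hw_conj, hpent']; simp only [mul_assoc]
    _ = w * star u₁₂ * u₂₃ := by rw [Unitary.mul_star_self_of_mem hu, mul_one]

theorem mul_star_conj_eq_of_commute {w u x : M} (hu : star u * u = 1) (hux : Commute u x) :
    w * star u * x * star (w * star u) = w * x * star w :=
  calc w * star u * x * star (w * star u) = w * (star u * (x * u)) * star w := by
        simp only [star_mul, star_star, mul_assoc]
    _ = w * x * star w := by rw [← hux.eq, ← mul_assoc (star u), hu, one_mul]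

end

theorem stmt4_general {B A : Type*} [Ring B] [StarRing B] [Ring A] [StarRing A]
    (e12 e13 e23 : B →+* A)
    (he12 : ∀ x, e12 (star x) = star (e12 x))
    (he23 : ∀ x, e23 (star x) = star (e23 x))
    (W U : B)
    (hWunitary : star W * W = 1 ∧ W * star W = 1)
    (hUunitary : star U * U = 1 ∧ U * star U = 1)
    (pentagonU : e12 U * e13 U * e23 U = e23 U * e12 U)
    (hbichar : star (e12 W) * e23 U * e12 W = e13 U * e23 U) :
    e23 (W * star U) * e12 (W * star U) * star (e23 (W * star U))
      = e23 W * e12 (W * star U) * star (e23 W) := by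
  let f₁₂ : B →⋆* A := { e12.toMonoidHom with map_star' := he12 }
  let f₂₃ : B →⋆* A := { e23.toMonoidHom with map_star' := he23 }
  have hW₁₂ : e12 W ∈ unitary A := Unitary.map_mem f₁₂ hWunitary
  have hU₁₂ : e12 U ∈ unitary A := Unitary.map_mem f₁₂ hUunitary
  have hU₂₃ : e23 U ∈ unitary A := Unitary.map_mem f₂₃ hUunitary
  rw [map_mul e12, map_mul e23, he12, he23]
  exact mul_star_conj_eq_of_commute (Unitary.star_mul_self_of_mem hU₂₃)
    (commute_mul_star_of_pentagon (Unitary.mul_star_self_of_mem hW₁₂) hU₁₂ pentagonU hbichar)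

/-- Lemma 4.2 (lemDDD), operator-algebraic core.  `B` models `B(H ⊗ H)` and `A`
models `B(H ⊗ H ⊗ H)` with the standard leg embeddings `e12, e13, e23`.  If `W`
and `U` are multiplicative unitaries with `W₁₂* U₂₃ W₁₂ = U₁₃ U₂₃`, then
`F := W U*` satisfies `F₂₃ F₁₂ F₂₃* = W₂₃ F₁₂ W₂₃*`. -/
theorem stmt4 {B A : Type*} [Ring B] [StarRing B] [Ring A] [StarRing A]
    (e12 e13 e23 : B →+* A)
    (he12 : ∀ x, e12 (star x) = star (e12 x))
    (he13 : ∀ x, e13 (star x) = star (e13 x))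
    (he23 : ∀ x, e23 (star x) = star (e23 x))
    (W U : B)
    (hWunitary : star W * W = 1 ∧ W * star W = 1)
    (hUunitary : star U * U = 1 ∧ U * star U = 1)
    (pentagonW : e12 W * e13 W * e23 W = e23 W * e12 W)
    (pentagonU : e12 U * e13 U * e23 U = e23 U * e12 U)
    (hbichar : star (e12 W) * e23 U * e12 W = e13 U * e23 U) :
    e23 (W * star U) * e12 (W * star U) * star (e23 (W * star U))
      = e23 W * e12 (W * star U) * star (e23 W) :=
  stmt4_general e12 e13 e23 he12 he23 W U hWunitary hUunitary pentagonU hbichar
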